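/- arXiv:2101.06082 — 3 statements merged into one kernel-verified Lean document; each statement's English description precedes it below -/
import Mathlib

section
/- Let Y be a finite set with at least 3 elements. Call a partition of Y a multi-partition if it has at least 3 blocks. Say two multi-partitions Π¹ and Π² of Y are compatible if there exist blocks P¹ ∈ Π¹ and P² ∈ Π² with P¹ ∪ P² = Y. If 𝒫 is a family of distinct, pairwise compatible multi-partitions of Y, then #Y ≥ #𝒫 + 2. -/
open Finset

namespace Stmt0Aux

variable {α : Type*} [DecidableEq α] {Y : Finset α}

lemma two_le_card_compl (π : Finpartition Y) (hm : 3 ≤ π.parts.card)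
    {B : Finset α} (hB : B ∈ π.parts) : 2 ≤ (Y \ B).card := by
  have h2 : 1 < (π.parts.erase B).card := by
    have := Finset.card_erase_of_mem hB; omega
  obtain ⟨P, hP, Q, hQ, hPQ⟩ := Finset.one_lt_card.mp h2
  have hP' := Finset.mem_of_mem_erase hP
  have hQ' := Finset.mem_of_mem_erase hQ
  obtain ⟨x, hx⟩ := π.nonempty_of_mem_parts hP'
  obtain ⟨y, hy⟩ := π.nonempty_of_mem_parts hQ'
  have hxy : x ≠ y := by
    intro h
    exact hPQ (π.eq_of_mem_parts hP' hQ' hx (h ▸ hy))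
  have hxm : x ∈ Y \ B := by
    refine Finset.mem_sdiff.mpr ⟨π.le hP' hx, fun hxB => ?_⟩
    exact (Finset.ne_of_mem_erase hP) (π.eq_of_mem_parts hP' hB hx hxB)
  have hym : y ∈ Y \ B := by
    refine Finset.mem_sdiff.mpr ⟨π.le hQ' hy, fun hyB => ?_⟩
    exact (Finset.ne_of_mem_erase hQ) (π.eq_of_mem_parts hQ' hB hy hyB)
  exact Finset.one_lt_card.mpr ⟨x, hxm, y, hym, hxy⟩

section Contract

variable {D E : Finset α} {d : α}

lemma contract_injOn (π : Finpartition Y) {Q : Finset α} (hQ : Q ∈ π.parts)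
    (hDQ : D ⊆ Q) (hd : d ∈ D) (hE : E = D.erase d) :
    Set.InjOn (· \ E) (π.parts : Set (Finset α)) := by
  intro P₁ hP₁' P₂ hP₂' h
  have hP₁ : P₁ ∈ π.parts := hP₁'
  have hP₂ : P₂ ∈ π.parts := hP₂'
  simp only at h
  have hdE : d ∉ E := by simp [hE]
  by_cases h₁ : d ∈ P₁
  · have hd2 : d ∈ P₂ := by
      have hmem : d ∈ P₁ \ E := Finset.mem_sdiff.mpr ⟨h₁, hdE⟩
      rw [h] at hmem; exact (Finset.mem_sdiff.mp hmem).1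
    exact (π.eq_of_mem_parts hP₁ hQ h₁ (hDQ hd)).trans
      (π.eq_of_mem_parts hP₂ hQ hd2 (hDQ hd)).symm
  · have h₂ : d ∉ P₂ := by
      intro hd2
      have hmem : d ∈ P₂ \ E := Finset.mem_sdiff.mpr ⟨hd2, hdE⟩
      rw [← h] at hmem; exact h₁ (Finset.mem_sdiff.mp hmem).1
    have e₁ : P₁ \ E = P₁ := by
      have hne : P₁ ≠ Q := fun he => h₁ (he ▸ hDQ hd)
      have hdisj : Disjoint P₁ Q := π.disjoint hP₁' hQ hne
      exact Finset.sdiff_eq_self_of_disjoint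
        (Finset.disjoint_of_subset_right (hE ▸ (Finset.erase_subset _ _).trans hDQ) hdisj)
    have e₂ : P₂ \ E = P₂ := by
      have hne : P₂ ≠ Q := fun he => h₂ (he ▸ hDQ hd)
      have hdisj : Disjoint P₂ Q := π.disjoint hP₂' hQ hne
      exact Finset.sdiff_eq_self_of_disjoint
        (Finset.disjoint_of_subset_right (hE ▸ (Finset.erase_subset _ _).trans hDQ) hdisj)
    rw [← e₁, ← e₂, h]

lemma contract_cond (π : Finpartition Y) {Q : Finset α} (hQ : Q ∈ π.parts)
    (hDQ : D ⊆ Q) (hd : d ∈ D) (hE : E = D.erase d) :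
    (π.parts.image (· \ E)).SupIndep id ∧ (π.parts.image (· \ E)).sup id = Y \ E ∧
      (⊥ : Finset α) ∉ π.parts.image (· \ E) := by
  have hdE : d ∉ E := by simp [hE]
  have hEQ : E ⊆ Q := hE ▸ (Finset.erase_subset _ _).trans hDQ
  have hnonempty : ∀ P ∈ π.parts, (P \ E).Nonempty := by
    intro P hP
    by_cases hdP : d ∈ P
    · exact ⟨d, Finset.mem_sdiff.mpr ⟨hdP, hdE⟩⟩
    · have hne : P ≠ Q := fun he => hdP (he ▸ hDQ hd)
      have hdisj : Disjoint P Q := π.disjoint hP hQ hne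
      rw [Finset.sdiff_eq_self_of_disjoint (Finset.disjoint_of_subset_right hEQ hdisj)]
      exact π.nonempty_of_mem_parts hP
  refine ⟨?_, ?_, ?_⟩
  · rw [Finset.supIndep_iff_pairwiseDisjoint]
    intro S₁ hS₁ S₂ hS₂ hne
    obtain ⟨P₁, hP₁, rfl⟩ := Finset.mem_image.mp hS₁
    obtain ⟨P₂, hP₂, rfl⟩ := Finset.mem_image.mp hS₂
    have hPne : P₁ ≠ P₂ := fun h => hne (by rw [h])
    exact (π.disjoint hP₁ hP₂ hPne).mono Finset.sdiff_subset Finset.sdiff_subset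
  · ext x
    simp only [Finset.mem_sup, Finset.mem_image, id_eq, Finset.mem_sdiff]
    constructor
    · rintro ⟨S, ⟨P, hP, rfl⟩, hxS⟩
      have := Finset.mem_sdiff.mp hxS
      exact ⟨π.le hP this.1, this.2⟩
    · rintro ⟨hxY, hxE⟩
      obtain ⟨P, hP, hxP⟩ := π.exists_mem hxY
      exact ⟨P \ E, ⟨P, hP, rfl⟩, Finset.mem_sdiff.mpr ⟨hxP, hxE⟩⟩
  · intro hbot
    obtain ⟨P, hP, hPE⟩ := Finset.mem_image.mp hbot
    obtain ⟨x, hx⟩ := hnonempty P hP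
    rw [hPE] at hx
    exact Finset.notMem_empty x hx

lemma unerase (π : Finpartition Y) {Q : Finset α} (hQ : Q ∈ π.parts)
    (hDQ : D ⊆ Q) (hd : d ∈ D) (hE : E = D.erase d) :
    ∀ P ∈ π.parts, (if d ∈ P \ E then (P \ E) ∪ E else P \ E) = P := by
  intro P hP
  have hdE : d ∉ E := by simp [hE]
  have hEQ : E ⊆ Q := hE ▸ (Finset.erase_subset _ _).trans hDQ
  by_cases hdP : d ∈ P
  · have hPQ : P = Q := π.eq_of_mem_parts hP hQ hdP (hDQ hd)
    rw [if_pos (Finset.mem_sdiff.mpr ⟨hdP, hdE⟩)]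
    exact hPQ ▸ Finset.sdiff_union_of_subset (hPQ ▸ hEQ)
  · have hne : P ≠ Q := fun he => hdP (he ▸ hDQ hd)
    have hdisj : Disjoint P Q := π.disjoint hP hQ hne
    have heq : P \ E = P :=
      Finset.sdiff_eq_self_of_disjoint (Finset.disjoint_of_subset_right hEQ hdisj)
    rw [heq, if_neg hdP]

open Classical in
/-- Contraction of a partition to `Y'`, valid when the side conditions hold. -/
noncomputable def contract (Y' E : Finset α) (hY' : Y' ≠ (⊥ : Finset α))
    (π : Finpartition Y) : Finpartition Y' :=
  if h : (π.parts.image (· \ E)).SupIndep id ∧ (π.parts.image (· \ E)).sup id = Y' ∧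
      (⊥ : Finset α) ∉ π.parts.image (· \ E)
  then ⟨π.parts.image (· \ E), h.1, h.2.1, h.2.2⟩
  else Finpartition.indiscrete hY'

lemma contract_parts {Y' E : Finset α} (hY' : Y' ≠ (⊥ : Finset α)) (π : Finpartition Y)
    (h : (π.parts.image (· \ E)).SupIndep id ∧ (π.parts.image (· \ E)).sup id = Y' ∧
      (⊥ : Finset α) ∉ π.parts.image (· \ E)) :
    (contract Y' E hY' π).parts = π.parts.image (· \ E) := by
  rw [contract, dif_pos h]

end Contract

lemma key : ∀ (n : ℕ) {α : Type*} [DecidableEq α] (Y : Finset α), Y.card ≤ n →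
    3 ≤ Y.card → ∀ (Ps : Finset (Finpartition Y)),
    (∀ π ∈ Ps, 3 ≤ π.parts.card) →
    (∀ π₁ ∈ Ps, ∀ π₂ ∈ Ps, π₁ ≠ π₂ →
      ∃ P₁ ∈ π₁.parts, ∃ P₂ ∈ π₂.parts, P₁ ∪ P₂ = Y) →
    Ps.card + 2 ≤ Y.card := by
  intro n
  induction n with
  | zero => intro α _ Y hYn hY3 Ps _ _; omega
  | succ n IH =>
    intro α inst Y hYn hY3 Ps hmulti hcompat
    by_cases hPs : Ps.card ≤ 1
    · omega
    push_neg at hPs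
    classical
    obtain ⟨πa, hπa, πb, hπb, hab⟩ := Finset.one_lt_card.mp hPs
    have hex : ∃ k, ∃ π₀ ∈ Ps, ∃ π₁ ∈ Ps, π₀ ≠ π₁ ∧ ∃ B₀ ∈ π₀.parts, ∃ B₁ ∈ π₁.parts,
        B₀ ∪ B₁ = Y ∧ (Y \ B₀).card = k := by
      obtain ⟨B₀, hB₀, B₁, hB₁, hU⟩ := hcompat πa hπa πb hπb hab
      exact ⟨(Y \ B₀).card, πa, hπa, πb, hπb, hab, B₀, hB₀, B₁, hB₁, hU, rfl⟩
    obtain ⟨π₀, hπ₀, π₁, hπ₁, hne01, B₀, hB₀, B₁, hB₁, hU01, hcard0⟩ := Nat.find_spec hex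
    have hmin : ∀ π ∈ Ps, ∀ π' ∈ Ps, π ≠ π' → ∀ B ∈ π.parts, ∀ B' ∈ π'.parts,
        B ∪ B' = Y → Nat.find hex ≤ (Y \ B).card := by
      intro π hπ π' hπ' hne B hB B' hB' hU
      exact Nat.find_min' hex ⟨π, hπ, π', hπ', hne, B, hB, B', hB', hU, rfl⟩
    set D := Y \ B₀ with hDdef
    have hDcard : 2 ≤ D.card := two_le_card_compl π₀ (hmulti π₀ hπ₀) hB₀
    have hB₀Y : B₀ ⊆ Y := π₀.le hB₀
    have hYD : Y \ D = B₀ := Finset.sdiff_sdiff_eq_self hB₀Y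
    obtain ⟨d, hd⟩ : D.Nonempty := Finset.card_pos.mp (by omega)
    set E := D.erase d with hEdef
    have hED : E ⊆ D := Finset.erase_subset _ _
    have hDY : D ⊆ Y := Finset.sdiff_subset
    have hEY : E ⊆ Y := hED.trans hDY
    have hdY : d ∈ Y := (Finset.mem_sdiff.mp hd).1
    have hdB₀ : d ∉ B₀ := (Finset.mem_sdiff.mp hd).2
    have hdE : d ∉ E := Finset.notMem_erase d D
    set Y' := Y \ E with hY'def
    have hdY' : d ∈ Y' := Finset.mem_sdiff.mpr ⟨hdY, hdE⟩
    have hEcard : E.card = D.card - 1 := Finset.card_erase_of_mem hd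
    have hY'card : Y'.card = Y.card - E.card := Finset.card_sdiff_of_subset hEY
    have hDYcard : D.card ≤ Y.card := Finset.card_le_card hDY
    -- B₀ has at least 2 elements
    have hB₀card : 2 ≤ B₀.card := by
      have hsub : Y \ B₁ ⊆ B₀ := by
        intro x hx
        have hx' := Finset.mem_sdiff.mp hx
        have : x ∈ B₀ ∪ B₁ := by rw [hU01]; exact hx'.1
        rcases Finset.mem_union.mp this with h | h
        · exact h
        · exact absurd h hx'.2
      exact le_trans (two_le_card_compl π₁ (hmulti π₁ hπ₁) hB₁) (Finset.card_le_card hsub)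
    have hB₀Y' : B₀ ⊆ Y' := by
      intro x hx
      refine Finset.mem_sdiff.mpr ⟨hB₀Y hx, fun hxE => ?_⟩
      exact (Finset.mem_sdiff.mp (hED hxE)).2 hx
    have hY'3 : 3 ≤ Y'.card := by
      have hins : insert d B₀ ⊆ Y' := Finset.insert_subset hdY' hB₀Y'
      have := Finset.card_le_card hins
      rw [Finset.card_insert_of_notMem hdB₀] at this
      omega
    -- Claim 1: every other partition has a block containing D
    have claim1 : ∀ π ∈ Ps, π ≠ π₀ → ∃ Q ∈ π.parts, D ⊆ Q := by
      intro π hπ hne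
      obtain ⟨Q, hQ, P, hP, hQP⟩ := hcompat π hπ π₀ hπ₀ hne
      by_cases hPB : P = B₀
      · refine ⟨Q, hQ, fun x hx => ?_⟩
        have hx' := Finset.mem_sdiff.mp hx
        have : x ∈ Q ∪ P := by rw [hQP]; exact hx'.1
        rcases Finset.mem_union.mp this with h | h
        · exact h
        · exact absurd (hPB ▸ h) hx'.2
      · exfalso
        have hdisj : Disjoint P B₀ := π₀.disjoint hP hB₀ hPB
        have hQY : Q ⊆ Y := π.le hQ
        have hsub : Y \ Q ⊆ D := by
          intro x hx
          have hx' := Finset.mem_sdiff.mp hx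
          have hxP : x ∈ P := by
            have : x ∈ Q ∪ P := by rw [hQP]; exact hx'.1
            rcases Finset.mem_union.mp this with h | h
            · exact absurd h hx'.2
            · exact h
          exact Finset.mem_sdiff.mpr ⟨hx'.1, fun hxB => Finset.disjoint_left.mp hdisj hxP hxB⟩
        have hge : D.card ≤ (Y \ Q).card := by
          have := hmin π hπ π₀ hπ₀ hne Q hQ P hP hQP
          omega
        have hYQ : Y \ Q = D := Finset.eq_of_subset_of_card_le hsub hge
        have hQB₀ : Q = B₀ := by
          have h2 := Finset.sdiff_sdiff_eq_self hQY
          rw [hYQ] at h2; rw [← h2, hYD]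
        have hQπ : B₀ ∈ π.parts := hQB₀ ▸ hQ
        -- every block other than B₀ (in π or π₀) is inside D
        have hsubD : ∀ (σ : Finpartition Y), B₀ ∈ σ.parts → ∀ R ∈ σ.parts, R ≠ B₀ → R ⊆ D := by
          intro σ hB R hR hRne x hx
          exact Finset.mem_sdiff.mpr ⟨σ.le hR hx,
            fun hxB => Finset.disjoint_left.mp (σ.disjoint hR hB hRne) hx hxB⟩
        obtain ⟨P', hP', Q', hQ', hPQ'⟩ := hcompat π₀ hπ₀ π hπ (Ne.symm hne)
        by_cases hP'B : P' = B₀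
        · -- Q' ⊇ D
          have hDQ' : D ⊆ Q' := by
            intro x hx
            have hx' := Finset.mem_sdiff.mp hx
            have : x ∈ P' ∪ Q' := by rw [hPQ']; exact hx'.1
            rcases Finset.mem_union.mp this with h | h
            · exact absurd (hP'B ▸ h) hx'.2
            · exact h
          by_cases hQ'B : Q' = B₀
          · exact hdB₀ (hQ'B ▸ hDQ' hd)
          · have hQ'D : Q' ⊆ D := hsubD π hQπ Q' hQ' hQ'B
            have hQ'eq : Q' = D := Finset.Subset.antisymm hQ'D hDQ'
            -- third block of π
            have h3 : 1 ≤ ((π.parts.erase B₀).erase Q').card := by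
              have e1 : (π.parts.erase B₀).card = π.parts.card - 1 :=
                Finset.card_erase_of_mem hQπ
              have hQ'mem : Q' ∈ π.parts.erase B₀ := Finset.mem_erase.mpr ⟨hQ'B, hQ'⟩
              have e2 := Finset.card_erase_of_mem hQ'mem
              have := hmulti π hπ
              omega
            obtain ⟨R, hR⟩ := Finset.card_pos.mp h3
            have hRQ' : R ≠ Q' := (Finset.mem_erase.mp hR).1
            have hRB₀ : R ≠ B₀ := (Finset.mem_erase.mp (Finset.mem_of_mem_erase hR)).1
            have hRmem : R ∈ π.parts := Finset.mem_of_mem_erase (Finset.mem_of_mem_erase hR)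
            obtain ⟨r, hr⟩ := π.nonempty_of_mem_parts hRmem
            have hrD : r ∈ D := hsubD π hQπ R hRmem hRB₀ hr
            exact Finset.disjoint_left.mp (π.disjoint hRmem hQ' hRQ') hr (hQ'eq ▸ hrD)
        · have hP'D : P' ⊆ D := hsubD π₀ hB₀ P' hP' hP'B
          -- third block of π₀
          have h3 : 1 ≤ ((π₀.parts.erase B₀).erase P').card := by
            have e1 : (π₀.parts.erase B₀).card = π₀.parts.card - 1 :=
              Finset.card_erase_of_mem hB₀
            have hP'mem : P' ∈ π₀.parts.erase B₀ := Finset.mem_erase.mpr ⟨hP'B, hP'⟩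
            have e2 := Finset.card_erase_of_mem hP'mem
            have := hmulti π₀ hπ₀
            omega
          obtain ⟨R, hR⟩ := Finset.card_pos.mp h3
          have hRP' : R ≠ P' := (Finset.mem_erase.mp hR).1
          have hRB₀ : R ≠ B₀ := (Finset.mem_erase.mp (Finset.mem_of_mem_erase hR)).1
          have hRmem : R ∈ π₀.parts := Finset.mem_of_mem_erase (Finset.mem_of_mem_erase hR)
          obtain ⟨r, hr⟩ := π₀.nonempty_of_mem_parts hRmem
          have hrD : r ∈ D := hsubD π₀ hB₀ R hRmem hRB₀ hr
          have hrP' : r ∉ P' := Finset.disjoint_left.mp (π₀.disjoint hRmem hP' hRP') hr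
          have hrQ' : r ∈ Q' := by
            have : r ∈ P' ∪ Q' := by rw [hPQ']; exact hDY hrD
            rcases Finset.mem_union.mp this with h | h
            · exact absurd h hrP'
            · exact h
          have hQ'B : Q' ≠ B₀ := by
            intro h
            exact (Finset.mem_sdiff.mp hrD).2 (h ▸ hrQ')
          have hQ'D : Q' ⊆ D := hsubD π hQπ Q' hQ' hQ'B
          obtain ⟨b, hb⟩ := π₀.nonempty_of_mem_parts hB₀
          have hbD : b ∉ D := fun h => (Finset.mem_sdiff.mp h).2 hb
          have : b ∈ P' ∪ Q' := by rw [hPQ']; exact hB₀Y hb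
          rcases Finset.mem_union.mp this with h | h
          · exact hbD (hP'D h)
          · exact hbD (hQ'D h)
    -- Construct the contracted family
    have hY'bot : Y' ≠ (⊥ : Finset α) := by
      intro h
      rw [h] at hdY'
      exact Finset.notMem_empty d hdY'
    have hcond : ∀ π ∈ Ps.erase π₀,
        (π.parts.image (· \ E)).SupIndep id ∧ (π.parts.image (· \ E)).sup id = Y' ∧
          (⊥ : Finset α) ∉ π.parts.image (· \ E) := by
      intro π hπ
      obtain ⟨Q, hQ, hDQ⟩ := claim1 π (Finset.mem_of_mem_erase hπ) (Finset.ne_of_mem_erase hπ)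
      exact contract_cond π hQ hDQ hd hEdef
    set f := contract (Y := Y) Y' E hY'bot with hfdef
    have hfparts : ∀ π ∈ Ps.erase π₀, (f π).parts = π.parts.image (· \ E) := by
      intro π hπ
      exact contract_parts hY'bot π (hcond π hπ)
    have hinj : Set.InjOn f (Ps.erase π₀ : Set (Finpartition Y)) := by
      intro σ₁ hσ₁' σ₂ hσ₂' hfeq
      have hσ₁ : σ₁ ∈ Ps.erase π₀ := hσ₁'
      have hσ₂ : σ₂ ∈ Ps.erase π₀ := hσ₂'
      obtain ⟨Q₁, hQ₁, hDQ₁⟩ := claim1 σ₁ (Finset.mem_of_mem_erase hσ₁)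
        (Finset.ne_of_mem_erase hσ₁)
      obtain ⟨Q₂, hQ₂, hDQ₂⟩ := claim1 σ₂ (Finset.mem_of_mem_erase hσ₂)
        (Finset.ne_of_mem_erase hσ₂)
      have himg : σ₁.parts.image (· \ E) = σ₂.parts.image (· \ E) := by
        rw [← hfparts σ₁ hσ₁, ← hfparts σ₂ hσ₂, hfeq]
      have hrec : ∀ (σ : Finpartition Y) (Q : Finset α), Q ∈ σ.parts → D ⊆ Q →
          (σ.parts.image (· \ E)).image (fun S => if d ∈ S then S ∪ E else S) = σ.parts := by
        intro σ Q hQ hDQ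
        rw [Finset.image_image]
        have : σ.parts.image ((fun S => if d ∈ S then S ∪ E else S) ∘ (· \ E)) =
            σ.parts.image id := by
          apply Finset.image_congr
          intro P hP
          exact unerase σ hQ hDQ hd hEdef P hP
        rw [this, Finset.image_id]
      have hparts : σ₁.parts = σ₂.parts := by
        rw [← hrec σ₁ Q₁ hQ₁ hDQ₁, ← hrec σ₂ Q₂ hQ₂ hDQ₂, himg]
      exact Finpartition.ext hparts
    set Ps' := (Ps.erase π₀).image f with hPs'def
    have hPs'card : Ps'.card = Ps.card - 1 := by
      rw [hPs'def, Finset.card_image_of_injOn hinj, Finset.card_erase_of_mem hπ₀]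
    have hmulti' : ∀ σ ∈ Ps', 3 ≤ σ.parts.card := by
      intro σ hσ
      obtain ⟨π, hπ, rfl⟩ := Finset.mem_image.mp hσ
      obtain ⟨Q, hQ, hDQ⟩ := claim1 π (Finset.mem_of_mem_erase hπ) (Finset.ne_of_mem_erase hπ)
      rw [hfparts π hπ, Finset.card_image_of_injOn (contract_injOn π hQ hDQ hd hEdef)]
      exact hmulti π (Finset.mem_of_mem_erase hπ)
    have hcompat' : ∀ σ₁ ∈ Ps', ∀ σ₂ ∈ Ps', σ₁ ≠ σ₂ →
        ∃ P₁ ∈ σ₁.parts, ∃ P₂ ∈ σ₂.parts, P₁ ∪ P₂ = Y' := by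
      intro σ₁ hσ₁ σ₂ hσ₂ hne
      obtain ⟨τ₁, hτ₁, rfl⟩ := Finset.mem_image.mp hσ₁
      obtain ⟨τ₂, hτ₂, rfl⟩ := Finset.mem_image.mp hσ₂
      have hτne : τ₁ ≠ τ₂ := fun h => hne (by rw [h])
      obtain ⟨P₁, hP₁, P₂, hP₂, hPU⟩ := hcompat τ₁ (Finset.mem_of_mem_erase hτ₁)
        τ₂ (Finset.mem_of_mem_erase hτ₂) hτne
      refine ⟨P₁ \ E, ?_, P₂ \ E, ?_, ?_⟩
      · rw [hfparts τ₁ hτ₁]; exact Finset.mem_image_of_mem _ hP₁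
      · rw [hfparts τ₂ hτ₂]; exact Finset.mem_image_of_mem _ hP₂
      · rw [← Finset.union_sdiff_distrib, hPU]
    have hY'n : Y'.card ≤ n := by omega
    have := IH Y' hY'n hY'3 Ps' hmulti' hcompat'
    omega

end Stmt0Aux

/-- If `Ps` is a family of distinct, pairwise compatible multi-partitions
(partitions with at least 3 blocks) of a finite set `Y` with `#Y ≥ 3`,
then `#Y ≥ #Ps + 2`. Compatibility of distinct `π₁, π₂` means some block `P₁ ∈ π₁` and
`P₂ ∈ π₂` satisfy `P₁ ∪ P₂ = Y`. -/
theorem stmt_0 {α : Type*} [DecidableEq α] (Y : Finset α) (hY : 3 ≤ Y.card)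
    (Ps : Finset (Finpartition Y))
    (hmulti : ∀ π ∈ Ps, 3 ≤ (Finpartition.parts π).card)
    (hcompat : ∀ π₁ ∈ Ps, ∀ π₂ ∈ Ps, π₁ ≠ π₂ →
      ∃ P₁ ∈ Finpartition.parts π₁, ∃ P₂ ∈ Finpartition.parts π₂, P₁ ∪ P₂ = Y) :
    Ps.card + 2 ≤ Y.card := by
  exact Stmt0Aux.key Y.card Y le_rfl hY Ps hmulti hcompat
end

section
/- Under a translation-invariant product measure ℙ_u on hyper-edge configurations satisfying the irreducibility condition, if the number of infinite open clusters is almost surely a finite constant k ≥ 1, then k = 1. -/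
/-!
Suppose `k ≥ 2`. Then for some vertices `x`, `y` the event "there are exactly `k` infinite
clusters and `x`, `y` lie in two distinct ones" has positive probability. Irreducibility gives a
finite set `S` of hyper-edges of positive weight joining `x` to `y`. Forcing `S` open glues the two
clusters together and creates no new infinite cluster (the new clusters are finite unions of old
ones), so it maps this event into the null event "fewer than `k` infinite clusters". That is
impossible by finite energy: on the event "`S` is open", which has positive probability and is
independent of the hyper-edges outside `S`, forcing `S` open changes nothing.
-/

open MeasureTheory

/-- Hyper-edges on `ℤ^d`: finite subsets of vertices. -/
abbrev HEdge (d : ℕ) := Finset (Fin d → ℤ)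

/-- Configurations of Bernoulli hyper-edge percolation. -/
abbrev Cfg (d : ℕ) := HEdge d → Bool

/-- Connectivity via chains of hyper-edges from `G`, augmented with the diagonal. -/
def connRel {d : ℕ} (G : Set (HEdge d)) (x y : Fin d → ℤ) : Prop :=
  x = y ∨ ∃ n : ℕ, ∃ hs : Fin (n + 1) → HEdge d,
    (∀ i, hs i ∈ G) ∧ x ∈ hs 0 ∧ y ∈ hs (Fin.last n) ∧
    ∀ i : Fin n, ((hs i.castSucc : HEdge d) ∩ hs i.succ).Nonempty

/-- Open hyper-edges of a configuration. -/
def openEdges {d : ℕ} (ω : Cfg d) : Set (HEdge d) := {h | ω h = true}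

/-- The open cluster of the vertex `x`. -/
def cluster {d : ℕ} (ω : Cfg d) (x : Fin d → ℤ) : Set (Fin d → ℤ) :=
  {y | connRel (openEdges ω) x y}

/-- The collection of infinite open clusters. -/
def infClusters {d : ℕ} (ω : Cfg d) : Set (Set (Fin d → ℤ)) :=
  {C | ∃ x, C = cluster ω x ∧ C.Infinite}

open ProbabilityTheory MeasurableSpace
open scoped ENNReal

section FiniteEnergy

variable {ι α : Type*}

def cyl (F : Finset ι) (c : ι → α) : Set (ι → α) := {ω | ∀ i ∈ F, ω i = c i}

lemma cyl_congr {F : Finset ι} {c c' : ι → α} (h : ∀ i ∈ F, c i = c' i) : cyl F c = cyl F c' := by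
  ext ω
  exact forall₂_congr fun i hi => by rw [h i hi]

lemma cyl_eq_of_mem {F : Finset ι} {c ω : ι → α} (hω : ω ∈ cyl F c) : cyl F c = cyl F ω :=
  cyl_congr fun i hi => (hω i hi).symm

lemma cyl_union [DecidableEq ι] (F G : Finset ι) (c : ι → α) :
    cyl (F ∪ G) c = cyl F c ∩ cyl G c := by
  ext ω
  simp only [cyl, Finset.mem_union, Set.mem_ofPred_eq, Set.mem_inter_iff, or_imp, forall_and]

lemma measurableSet_cyl [MeasurableSpace α] [MeasurableSingletonClass α] (F : Finset ι)
    (c : ι → α) : MeasurableSet (cyl F c) :=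
  MeasurableSet.pi F.countable_toSet fun i _ => measurableSet_singleton (c i)

def offCyls (S : Finset ι) : Set (Set (ι → α)) :=
  {t | ∃ F c, Disjoint F S ∧ t = cyl F c}

lemma isPiSystem_offCyls [DecidableEq ι] (S : Finset ι) : IsPiSystem (offCyls (α := α) S) := by
  rintro _ ⟨F, c, hF, rfl⟩ _ ⟨G, c', hG, rfl⟩ ⟨ω, hωF, hωG⟩
  refine ⟨F ∪ G, ω, Finset.disjoint_union_left.2 ⟨hF, hG⟩, ?_⟩
  rw [cyl_union, cyl_eq_of_mem hωF, cyl_eq_of_mem hωG]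

variable [MeasurableSpace α] {P : Measure (ι → α)} {q : ι → α → ℝ≥0∞}

lemma measure_cyl_inter_of_disjoint [DecidableEq ι]
    (hP : ∀ F c, P (cyl F c) = ∏ i ∈ F, q i (c i)) {F S : Finset ι} (hFS : Disjoint F S)
    (c c' : ι → α) : P (cyl F c ∩ cyl S c') = P (cyl F c) * P (cyl S c') := by
  set e := F.piecewise c c'
  have hF : cyl F c = cyl F e := cyl_congr fun i hi => (F.piecewise_eq_of_mem c c' hi).symm
  have hS : cyl S c' = cyl S e := cyl_congr fun i hi =>
    (F.piecewise_eq_of_notMem c c' (Finset.disjoint_right.1 hFS hi)).symm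
  rw [hF, hS, ← cyl_union, hP, hP, hP, Finset.prod_union hFS]

lemma indep_offCyls_cyl [MeasurableSingletonClass α] [DecidableEq ι] [IsZeroOrProbabilityMeasure P]
    (hP : ∀ F c, P (cyl F c) = ∏ i ∈ F, q i (c i)) (S : Finset ι) (c : ι → α) :
    Indep (generateFrom (offCyls S)) (generateFrom {cyl S c}) P := by
  refine IndepSets.indep' ?_ ?_ (isPiSystem_offCyls S) (IsPiSystem.singleton _) ?_
  · rintro _ ⟨F, c', -, rfl⟩
    exact measurableSet_cyl F c'
  · rintro _ rfl
    exact measurableSet_cyl S c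
  · rw [IndepSets_iff]
    rintro _ _ ⟨F, c', hFS, rfl⟩ rfl
    exact measure_cyl_inter_of_disjoint hP hFS c' c

lemma measurable_piecewise_offCyls [Countable α] [DecidableEq ι] (S : Finset ι) (c : ι → α) :
    Measurable[generateFrom (offCyls S)] fun ω => S.piecewise c ω := by
  refine @measurable_pi_lambda _ _ _ (generateFrom (offCyls S)) _ _ fun i => ?_
  by_cases hi : i ∈ S
  · simp only [S.piecewise_eq_of_mem _ _ hi]
    exact measurable_const
  · simp only [S.piecewise_eq_of_notMem _ _ hi]
    refine @measurable_to_countable' _ _ _ _ (generateFrom (offCyls S)) _ fun a =>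
      measurableSet_generateFrom ?_
    refine ⟨{i}, fun _ => a, Finset.disjoint_singleton_left.2 hi, ?_⟩
    ext ω
    simp [cyl]

/-- Finite energy. On `cyl S c` forcing the pattern `c` changes nothing, and `cyl S c` is
independent of the coordinates outside `S`, which are all that the forced configuration reads. -/
lemma measure_preimage_piecewise_eq_zero [MeasurableSingletonClass α] [Countable α] [DecidableEq ι]
    [IsZeroOrProbabilityMeasure P] (hP : ∀ F c, P (cyl F c) = ∏ i ∈ F, q i (c i))
    {S : Finset ι} {c : ι → α} (hc : P (cyl S c) ≠ 0) {E : Set (ι → α)} (hE : P E = 0) :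
    P ((fun ω => S.piecewise c ω) ⁻¹' E) = 0 := by
  set E' := toMeasurable P E
  have hfix : ∀ ω ∈ cyl S c, S.piecewise c ω = ω := fun ω hω => by
    ext i
    by_cases hi : i ∈ S
    · rw [S.piecewise_eq_of_mem _ _ hi, hω i hi]
    · rw [S.piecewise_eq_of_notMem _ _ hi]
  have hinter : (fun ω => S.piecewise c ω) ⁻¹' E' ∩ cyl S c ⊆ E' := fun ω ⟨hω, hωc⟩ => by
    rwa [Set.mem_preimage, hfix ω hωc] at hω
  have hprod : P ((fun ω => S.piecewise c ω) ⁻¹' E') * P (cyl S c) = 0 := by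
    rw [← (Indep_iff _ _ P).1 (indep_offCyls_cyl hP S c) _ _
      (measurable_piecewise_offCyls S c (measurableSet_toMeasurable P E))
      (measurableSet_generateFrom rfl)]
    exact measure_mono_null hinter (by rwa [measure_toMeasurable])
  exact measure_mono_null (Set.preimage_mono (subset_toMeasurable P E))
    ((mul_eq_zero.1 hprod).resolve_right hc)

end FiniteEnergy

section Clusters

variable {d : ℕ}

def AdjVia (G : Set (HEdge d)) (a b : Fin d → ℤ) : Prop := ∃ h ∈ G, a ∈ h ∧ b ∈ h

lemma reflTransGen_adjVia_of_chain {G : Set (HEdge d)} :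
    ∀ (n : ℕ) (hs : Fin (n + 1) → HEdge d), (∀ i, hs i ∈ G) →
    (∀ i : Fin n, ((hs i.castSucc : HEdge d) ∩ hs i.succ).Nonempty) →
    ∀ {x y : Fin d → ℤ}, x ∈ hs 0 → y ∈ hs (Fin.last n) →
    Relation.ReflTransGen (AdjVia G) x y
  | 0, hs, hG, _, _, _, hx, hy => .single ⟨hs 0, hG 0, hx, hy⟩
  | n + 1, hs, hG, hlink, x, y, hx, hy => by
    obtain ⟨v, hv⟩ := hlink (Fin.last n)
    rw [Finset.mem_inter, Fin.succ_last] at hv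
    refine .tail (reflTransGen_adjVia_of_chain n (fun i => hs i.castSucc) (fun i => hG _)
      (fun i => ?_) hx hv.1) ⟨_, hG _, hv.2, hy⟩
    simpa only [Fin.succ_castSucc] using hlink i.castSucc

lemma connRel_iff_reflTransGen {G : Set (HEdge d)} {x y : Fin d → ℤ} :
    connRel G x y ↔ Relation.ReflTransGen (AdjVia G) x y := by
  refine ⟨?_, fun h => ?_⟩
  · rintro (rfl | ⟨n, hs, hG, hx, hy, hlink⟩)
    · exact .refl
    · exact reflTransGen_adjVia_of_chain n hs hG hlink hx hy
  induction h with
  | refl => exact Or.inl rfl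
  | @tail b c _ hbc ih =>
    obtain ⟨h, hG, hb, hc⟩ := hbc
    rcases ih with rfl | ⟨n, hs, hsG, hx, hyb, hlink⟩
    · exact Or.inr ⟨0, fun _ => h, fun _ => hG, hb, hc, Fin.elim0⟩
    refine Or.inr ⟨n + 1, Fin.snoc hs h, fun i => ?_, ?_, by simpa using hc, fun i => ?_⟩
    · induction i using Fin.lastCases with
      | last => simpa using hG
      | cast j => simpa using hsG j
    · rwa [← Fin.castSucc_zero, Fin.snoc_castSucc]
    · induction i using Fin.lastCases with
      | last =>
        rw [Fin.snoc_castSucc, Fin.succ_last, Fin.snoc_last]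
        exact ⟨b, Finset.mem_inter.2 ⟨hyb, hb⟩⟩
      | cast j =>
        rw [Fin.snoc_castSucc, Fin.succ_castSucc, Fin.snoc_castSucc]
        exact hlink j

lemma AdjVia.connRel {G : Set (HEdge d)} {a b : Fin d → ℤ} (h : AdjVia G a b) : connRel G a b :=
  connRel_iff_reflTransGen.2 (.single h)

lemma AdjVia.symm {G : Set (HEdge d)} {a b : Fin d → ℤ} (h : AdjVia G a b) : AdjVia G b a :=
  let ⟨e, he, ha, hb⟩ := h; ⟨e, he, hb, ha⟩

lemma connRel_symm {G : Set (HEdge d)} {x y : Fin d → ℤ} (h : connRel G x y) :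
    connRel G y x := by
  rw [connRel_iff_reflTransGen] at h ⊢
  exact Relation.ReflTransGen.mono (fun _ _ => AdjVia.symm) _ _ (Relation.ReflTransGen.swap _ _ h)

lemma connRel_trans {G : Set (HEdge d)} {x y z : Fin d → ℤ}
    (h₁ : connRel G x y) (h₂ : connRel G y z) : connRel G x z := by
  rw [connRel_iff_reflTransGen] at *
  exact h₁.trans h₂

lemma connRel_mono {G G' : Set (HEdge d)} (hG : G ⊆ G') {x y : Fin d → ℤ}
    (h : connRel G x y) : connRel G' x y := by
  rw [connRel_iff_reflTransGen] at *
  exact Relation.ReflTransGen.mono (fun _ _ ⟨e, he, ha, hb⟩ => ⟨e, hG he, ha, hb⟩) _ _ h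

lemma exists_finset_connRel {G : Set (HEdge d)} {x y : Fin d → ℤ} (h : connRel G x y) :
    ∃ S : Finset (HEdge d), ↑S ⊆ G ∧ connRel ↑S x y := by
  classical
  rcases h with rfl | ⟨n, hs, hG, hx, hy, hlink⟩
  · exact ⟨∅, by simp, Or.inl rfl⟩
  · refine ⟨Finset.univ.image hs, by simpa [Set.subset_def] using hG, ?_⟩
    exact Or.inr ⟨n, hs, fun i => by simp, hx, hy, hlink⟩

lemma mem_cluster_self (ω : Cfg d) (x : Fin d → ℤ) : x ∈ cluster ω x := Or.inl rfl

lemma cluster_eq_of_mem {ω : Cfg d} {x y : Fin d → ℤ} (h : y ∈ cluster ω x) :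
    cluster ω y = cluster ω x :=
  Set.ext fun _ => ⟨connRel_trans h, connRel_trans (connRel_symm h)⟩

lemma cluster_eq_cluster_iff {ω : Cfg d} {x y : Fin d → ℤ} :
    cluster ω x = cluster ω y ↔ y ∈ cluster ω x :=
  ⟨fun h => h ▸ mem_cluster_self ω y, fun h => (cluster_eq_of_mem h).symm⟩

end Clusters

section Opening

variable {d : ℕ} (S : Finset (HEdge d)) (ω : Cfg d)

lemma openEdges_piecewise_true :
    openEdges (S.piecewise (fun _ => true) ω) = ↑S ∪ openEdges ω := by
  ext h
  by_cases hS : h ∈ S <;> simp [openEdges, hS]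

lemma cluster_subset_cluster_piecewise (x : Fin d → ℤ) :
    cluster ω x ⊆ cluster (S.piecewise (fun _ => true) ω) x := fun _ =>
  connRel_mono (by rw [openEdges_piecewise_true]; exact Set.subset_union_right)

lemma cluster_piecewise_subset (z : Fin d → ℤ) :
    cluster (S.piecewise (fun _ => true) ω) z ⊆ ⋃ w ∈ insert z (S.biUnion id), cluster ω w := by
  intro t ht
  rw [cluster, Set.mem_ofPred_eq, connRel_iff_reflTransGen, openEdges_piecewise_true] at ht
  induction ht with
  | refl => exact Set.mem_biUnion (Finset.mem_insert_self z _) (mem_cluster_self ω z)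
  | @tail b c _ hbc ih =>
    obtain ⟨e, he | he, hb, hc⟩ := hbc
    · exact Set.mem_biUnion (Finset.mem_insert_of_mem (Finset.mem_biUnion.2 ⟨e, he, hc⟩))
        (mem_cluster_self ω c)
    · obtain ⟨w, hw, hbw⟩ := Set.mem_iUnion₂.1 ih
      exact Set.mem_biUnion hw (connRel_trans hbw (AdjVia.connRel ⟨e, he, hb, hc⟩))

lemma exists_infinite_cluster_of_infinite_cluster_piecewise {z : Fin d → ℤ}
    (hz : (cluster (S.piecewise (fun _ => true) ω) z).Infinite) :
    ∃ w ∈ cluster (S.piecewise (fun _ => true) ω) z, (cluster ω w).Infinite := by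
  set T := S.piecewise (fun _ => true) ω
  by_contra! hfin
  refine hz (Set.Finite.subset (((insert z (S.biUnion id)).finite_toSet.inter_of_left
    (cluster T z)).biUnion fun w hw => hfin w hw.2) fun t ht => ?_)
  obtain ⟨w, hw, htw⟩ := Set.mem_iUnion₂.1 (cluster_piecewise_subset S ω z ht)
  have hwt : w ∈ cluster T t := connRel_symm (cluster_subset_cluster_piecewise S ω w htw)
  exact Set.mem_biUnion ⟨hw, (cluster_eq_of_mem ht) ▸ hwt⟩ htw

lemma encard_infClusters_piecewise_add_one_le {x y : Fin d → ℤ} (hxy : connRel ↑S x y)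
    (hx : (cluster ω x).Infinite) (hy : (cluster ω y).Infinite)
    (hne : cluster ω x ≠ cluster ω y) :
    (infClusters (S.piecewise (fun _ => true) ω)).encard + 1 ≤ (infClusters ω).encard := by
  set T := S.piecewise (fun _ => true) ω
  let f : Set (Fin d → ℤ) → Set (Fin d → ℤ) := fun C => ⋃ c ∈ C, cluster T c
  have hf : ∀ w, f (cluster ω w) = cluster T w := fun w =>
    (Set.iUnion₂_subset fun _ hc =>
      (cluster_eq_of_mem (cluster_subset_cluster_piecewise S ω w hc)).subset).antisymm
      (Set.subset_biUnion_of_mem (mem_cluster_self ω w))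
  have hTxy : cluster T x = cluster T y := cluster_eq_cluster_iff.2 <|
    connRel_mono (by rw [openEdges_piecewise_true]; exact Set.subset_union_left) hxy
  have hsub : infClusters T ⊆ f '' (infClusters ω \ {cluster ω y}) := by
    rintro _ ⟨z, rfl, hz⟩
    obtain ⟨w, hwz, hw⟩ := exists_infinite_cluster_of_infinite_cluster_piecewise S ω hz
    rw [← cluster_eq_of_mem hwz]
    by_cases hwy : cluster ω w = cluster ω y
    · exact ⟨cluster ω x, ⟨⟨x, rfl, hx⟩, hne⟩, by rw [hf, hTxy, ← hf y, ← hwy, hf]⟩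
    · exact ⟨cluster ω w, ⟨⟨w, rfl, hw⟩, hwy⟩, hf w⟩
  calc (infClusters T).encard + 1
      ≤ (infClusters ω \ {cluster ω y}).encard + 1 :=
        add_le_add_left ((Set.encard_le_encard hsub).trans (Set.encard_image_le _ _)) 1
    _ = (infClusters ω).encard := Set.encard_sdiff_singleton_add_one ⟨y, rfl, hy⟩

end Opening

lemma Set.le_encard_iff_exists_injective {α : Type*} {s : Set α} {m : ℕ} :
    (m : ℕ∞) ≤ s.encard ↔ ∃ f : Fin m → α, Function.Injective f ∧ ∀ i, f i ∈ s := by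
  refine ⟨fun h => ?_, fun ⟨f, hf, hfs⟩ => ?_⟩
  · obtain ⟨t, hts, htm⟩ := Set.exists_subset_encard_eq h
    have ht : t.Finite := Set.finite_of_encard_eq_coe htm
    have hcard : ht.toFinset.card = m := by
      rw [ht.encard_eq_coe_toFinset_card] at htm
      exact_mod_cast htm
    let e := (ht.toFinset.equivFin.trans (finCongr hcard)).symm
    exact ⟨fun i => e i, Subtype.val_injective.comp e.injective,
      fun i => hts (ht.mem_toFinset.1 (e i).2)⟩
  · calc (m : ℕ∞) = ENat.card (Fin m) := by simp
      _ ≤ (Set.range f).encard := hf.encard_range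
      _ ≤ s.encard := Set.encard_le_encard (Set.range_subset_iff.2 hfs)

section Measurability

variable {d : ℕ}

lemma measurable_mem_cluster (x y : Fin d → ℤ) :
    Measurable fun ω : Cfg d => y ∈ cluster ω x := by
  simp only [cluster, connRel, openEdges, Set.mem_ofPred_eq]
  fun_prop

lemma measurable_cluster_infinite (x : Fin d → ℤ) :
    Measurable fun ω : Cfg d => (cluster ω x).Infinite := by
  have h : ∀ s : Set (Fin d → ℤ), s.Infinite ↔ ∀ F : Finset (Fin d → ℤ), ∃ y, y ∉ F ∧ y ∈ s :=
    fun s => ⟨fun hs F => (hs.exists_notMem_finset F).imp fun _ ⟨hy, hyF⟩ => ⟨hyF, hy⟩,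
      fun hs hfin => (hs hfin.toFinset).elim fun _ ⟨hyF, hy⟩ => hyF (hfin.mem_toFinset.2 hy)⟩
  simp only [h]
  exact .forall fun F => .exists fun y => .and measurable_const (measurable_mem_cluster x y)

lemma le_encard_infClusters_iff {ω : Cfg d} {m : ℕ} :
    (m : ℕ∞) ≤ (infClusters ω).encard ↔ ∃ p : Fin m → (Fin d → ℤ),
      (∀ i, (cluster ω (p i)).Infinite) ∧ ∀ i j, i ≠ j → p j ∉ cluster ω (p i) := by
  rw [Set.le_encard_iff_exists_injective]
  constructor
  · rintro ⟨f, hf, hfω⟩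
    choose p hp using hfω
    refine ⟨p, fun i => (hp i).1 ▸ (hp i).2, fun i j hij hji => hij (hf ?_)⟩
    rw [(hp i).1, (hp j).1, cluster_eq_cluster_iff]
    exact hji
  · rintro ⟨p, hinf, hdist⟩
    refine ⟨fun i => cluster ω (p i), fun i j hij => ?_, fun i => ⟨p i, rfl, hinf i⟩⟩
    by_contra hne
    exact hdist i j hne (cluster_eq_cluster_iff.1 hij)

lemma measurableSet_le_encard_infClusters (m : ℕ) :
    MeasurableSet {ω : Cfg d | (m : ℕ∞) ≤ (infClusters ω).encard} := by
  simp only [le_encard_infClusters_iff]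
  refine Measurable.setOf (.exists fun p => .and (.forall fun i => measurable_cluster_infinite _)
    (.forall fun i => .forall fun j => .imp measurable_const (measurable_mem_cluster _ _).not))

end Measurability

lemma measure_distinct_infinite_clusters_eq_zero {d : ℕ} {P : Measure (Cfg d)}
    [IsZeroOrProbabilityMeasure P] {q : HEdge d → Bool → ℝ≥0∞}
    (hP : ∀ F c, P (cyl F c) = ∏ h ∈ F, q h (c h)) {k : ℕ}
    (hk : P {ω : Cfg d | (k : ℕ∞) ≤ (infClusters ω).encard}ᶜ = 0) {S : Finset (HEdge d)}
    (hS : P (cyl S fun _ => true) ≠ 0) {x y : Fin d → ℤ} (hxy : connRel ↑S x y) :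
    P {ω | (infClusters ω).encard = k ∧ (cluster ω x).Infinite ∧ (cluster ω y).Infinite ∧
      cluster ω x ≠ cluster ω y} = 0 := by
  refine measure_mono_null ?_ (measure_preimage_piecewise_eq_zero hP hS hk)
  rintro ω ⟨hωk, hx, hy, hne⟩ hk'
  have := (add_le_add_left hk' 1).trans
    ((encard_infClusters_piecewise_add_one_le S ω hxy hx hy hne).trans hωk.le)
  norm_cast at this
  omega

theorem stmt_13_general {d : ℕ} (μ : HEdge d → ℝ)
    (u : ℝ) (hu : 0 < u) (hu1 : u < 1)
    (hirr : ∀ x y : Fin d → ℤ, connRel {h : HEdge d | 0 < μ h} x y)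
    (P : Measure (Cfg d)) [IsProbabilityMeasure P]
    (hprod : ∀ (F : Finset (HEdge d)) (c : HEdge d → Bool),
      P {ω | ∀ h ∈ F, ω h = c h} =
        ∏ h ∈ F, ENNReal.ofReal (if c h then 1 - (1 - u) ^ (μ h) else (1 - u) ^ (μ h)))
    (k : ℕ) (hk : 1 ≤ k)
    (hconst : P {ω | (infClusters ω).Finite ∧ (infClusters ω).ncard = k} = 1) :
    k = 1 := by
  by_contra hk1
  have hA : ∀ ω ∈ {ω : Cfg d | (infClusters ω).Finite ∧ (infClusters ω).ncard = k},
      (infClusters ω).encard = k := fun ω hω => hω.2 ▸ hω.1.cast_ncard_eq.symm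
  have hfew : P {ω : Cfg d | (k : ℕ∞) ≤ (infClusters ω).encard}ᶜ = 0 := by
    rw [prob_compl_eq_zero_iff (measurableSet_le_encard_infClusters k)]
    exact le_antisymm prob_le_one (hconst ▸ measure_mono fun ω hω => (hA ω hω).ge)
  have hnull : ∀ x y, P {ω | (infClusters ω).encard = k ∧ (cluster ω x).Infinite ∧
      (cluster ω y).Infinite ∧ cluster ω x ≠ cluster ω y} = 0 := fun x y => by
    obtain ⟨S, hSμ, hS⟩ := exists_finset_connRel (hirr x y)
    refine measure_distinct_infinite_clusters_eq_zero
      (q := fun h b => ENNReal.ofReal (if b then 1 - (1 - u) ^ μ h else (1 - u) ^ μ h))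
      hprod hfew ?_ hS
    rw [cyl, hprod]
    simp only [if_true]
    exact Finset.prod_ne_zero_iff.2 fun h hh => (ENNReal.ofReal_pos.2 (sub_pos.2
      (Real.rpow_lt_one (by linarith) (by linarith) (hSμ hh)))).ne'
  refine one_ne_zero (hconst ▸ measure_mono_null (fun ω hω => ?_)
    (measure_iUnion_null fun x => measure_iUnion_null fun y => hnull x y))
  obtain ⟨_, _, ⟨x, rfl, hx⟩, ⟨y, rfl, hy⟩, hne⟩ :=
    Set.one_lt_encard_iff.1 (by rw [hA ω hω]; exact_mod_cast (by omega : 1 < k))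
  exact Set.mem_iUnion₂.2 ⟨x, y, hA ω hω, hx, hy, hne⟩

/-- for the translation-invariant product measure (each hyper-edge `h`
open independently with probability `1-(1-u)^{μ({h})}`) with `μ` irreducible, if the
number of infinite open clusters is a.s. equal to a finite constant `k ≥ 1`, then
`k = 1`. -/
theorem stmt_13 {d : ℕ} (μ : HEdge d → ℝ) (hμ : ∀ h, 0 ≤ μ h)
    (u : ℝ) (hu : 0 < u) (hu1 : u < 1)
    (hTI : ∀ (v : Fin d → ℤ) (h : HEdge d), μ (h.image (v + ·)) = μ h)
    (hirr : ∀ x y : Fin d → ℤ, connRel {h : HEdge d | 0 < μ h} x y)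
    (P : Measure (Cfg d)) [IsProbabilityMeasure P]
    (hprod : ∀ (F : Finset (HEdge d)) (c : HEdge d → Bool),
      P {ω | ∀ h ∈ F, ω h = c h} =
        ∏ h ∈ F, ENNReal.ofReal (if c h then 1 - (1 - u) ^ (μ h) else (1 - u) ^ (μ h)))
    (k : ℕ) (hk : 1 ≤ k)
    (hconst : P {ω | (infClusters ω).Finite ∧ (infClusters ω).ncard = k} = 1) :
    k = 1 :=
  stmt_13_general μ u hu hu1 hirr P hprod k hk hconst
end

section
/- Fix constants c, m with m > 2c, and consider the modified face F(m,c) obtained from the face F(m) = {x ∈ ∂B(m) : x₁ = m} of the box B(m) ⊆ ℤ^d by removing its 2^{d-1} corner cubes of side c. Then for all sufficiently large n divisible appropriately, the corner-removed octant face T(n,c) can be covered by translates of F(m,c), and these translates can be partitioned into 2^{d-1} groups such that translates within each group are pairwise disjoint. -/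
/-- The corner-removed face `F(m,c)` of the box `B(m) ⊆ ℤ^d`, viewed in the
`(d-1)`-dimensional cross-section (`k = d - 1`): points `y` of the cube `[-m,m]^k`
having some coordinate in `[-(m-c), m-c]` (i.e. with the `2^k` corner cubes of side `c`
removed). -/
def faceMC (k m c : ℕ) : Set (Fin k → ℤ) :=
  {y | (∀ i, |y i| ≤ (m : ℤ)) ∧ ∃ i, |y i| ≤ (m : ℤ) - (c : ℤ)}

/-- The corner-removed octant `T(n,c)` in the `(d-1)`-dimensional cross-section:
points of `[0,n]^k` having some coordinate `≤ n - c`. -/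
def octantNC (k n c : ℕ) : Set (Fin k → ℤ) :=
  {y | (∀ i, 0 ≤ y i ∧ y i ≤ (n : ℤ)) ∧ ∃ i, y i ≤ (n : ℤ) - (c : ℤ)}

private lemma grid1 (m : ℕ) (y : ℤ) :
    ∃ v : ℤ, v % (2*(m:ℤ)+1) = 0 ∧ |y - v| ≤ (m:ℤ) := by
  set S : ℤ := 2*(m:ℤ)+1 with hS
  have hS0 : 0 < S := by positivity
  have h := Int.mul_ediv_add_emod y S
  have ha0 : 0 ≤ y % S := Int.emod_nonneg _ (by omega)
  have ha1 : y % S < S := Int.emod_lt_of_pos _ hS0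
  by_cases hc : y % S ≤ (m:ℤ)
  · exact ⟨S * (y / S), Int.mul_emod_right _ _, by rw [abs_le]; omega⟩
  · refine ⟨S * (y / S + 1), Int.mul_emod_right _ _, ?_⟩
    have he : S * (y / S + 1) = S * (y / S) + S := by ring
    rw [abs_le]; omega

private lemma grid2 (m c : ℕ) (hmc : 2 * c < m) (y : ℤ) :
    ∃ v : ℤ, (v % (2*(m:ℤ)+1) = 0 ∨ v % (2*(m:ℤ)+1) = m) ∧ |y - v| ≤ (m:ℤ) - c := by
  set S : ℤ := 2*(m:ℤ)+1 with hS
  have hS0 : 0 < S := by positivity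
  have h := Int.mul_ediv_add_emod y S
  have ha0 : 0 ≤ y % S := Int.emod_nonneg _ (by omega)
  have ha1 : y % S < S := Int.emod_lt_of_pos _ hS0
  have hmc' : 2 * (c:ℤ) < m := by exact_mod_cast hmc
  by_cases h1 : y % S ≤ (m:ℤ) - c
  · exact ⟨S * (y / S), Or.inl (Int.mul_emod_right _ _), by rw [abs_le]; omega⟩
  by_cases h2 : y % S ≤ 2*(m:ℤ) - c
  · refine ⟨S * (y / S) + m, Or.inr ?_, ?_⟩
    · rw [add_comm, Int.add_mul_emod_self_left]
      exact Int.emod_eq_of_lt (by positivity) (by omega)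
    · rw [abs_le]; omega
  · refine ⟨S * (y / S + 1), Or.inl (Int.mul_emod_right _ _), ?_⟩
    have he : S * (y / S + 1) = S * (y / S) + S := by ring
    rw [abs_le]; omega

/-- fix `c` and `m > 2c`. For all sufficiently large `n`, the
corner-removed octant face `T(n,c)` can be covered by translates of the corner-removed
face `F(m,c)`, and these translates can be partitioned into `2^{d-1} = 2^k` groups such
that the translates within each group are pairwise disjoint. -/
theorem stmt_18 (k c m : ℕ) (hmc : 2 * c < m) :
    ∃ N : ℕ, ∀ n ≥ N,
      ∃ (V : Finset (Fin k → ℤ)) (g : (Fin k → ℤ) → Fin (2 ^ k)),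
        (octantNC k n c ⊆ ⋃ v ∈ V, (fun y => v + y) '' faceMC k m c) ∧
        (∀ v₁ ∈ V, ∀ v₂ ∈ V, v₁ ≠ v₂ → g v₁ = g v₂ →
          Disjoint ((fun y => v₁ + y) '' faceMC k m c)
            ((fun y => v₂ + y) '' faceMC k m c)) := by
  classical
  refine ⟨0, fun n _ => ?_⟩
  set S : ℤ := 2*(m:ℤ)+1 with hSdef
  refine ⟨Fintype.piFinset (fun _ : Fin k =>
      (Finset.Icc (-(m:ℤ)) ((n:ℤ)+m)).filter (fun x => x % S = 0 ∨ x % S = m)),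
    fun v => finFunctionFinEquiv (fun i => if v i % S = (m:ℤ) then 1 else 0), ?_, ?_⟩
  · rintro y ⟨hbox, i₀, hi₀⟩
    have hv : ∀ i : Fin k, ∃ w : ℤ, (w % S = 0 ∨ w % S = m) ∧ |y i - w| ≤ (m:ℤ)
        ∧ (i = i₀ → |y i - w| ≤ (m:ℤ) - c) := by
      intro i
      by_cases h : i = i₀
      · obtain ⟨w, hw1, hw2⟩ := grid2 m c hmc (y i)
        exact ⟨w, hw1, le_trans hw2 (by omega), fun _ => hw2⟩
      · obtain ⟨w, hw1, hw2⟩ := grid1 m (y i)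
        exact ⟨w, Or.inl hw1, hw2, fun hh => absurd hh h⟩
    choose v hv1 hv2 hv3 using hv
    refine Set.mem_iUnion₂.2 ⟨v, ?_, y - v, ⟨?_, i₀, ?_⟩, by simp⟩
    · rw [Fintype.mem_piFinset]
      intro i
      rw [Finset.mem_filter, Finset.mem_Icc]
      have h2 := hv2 i
      rw [abs_le] at h2
      have hyi := hbox i
      exact ⟨⟨by omega, by omega⟩, hv1 i⟩
    · intro i; simpa using hv2 i
    · simpa using hv3 i₀ rfl
  · intro v₁ h₁ v₂ h₂ hne hg
    rw [Fintype.mem_piFinset] at h₁ h₂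
    have hres : ∀ i, v₁ i % S = v₂ i % S := by
      intro i
      have e := congrFun (finFunctionFinEquiv.injective hg) i
      have r₁ := (Finset.mem_filter.1 (h₁ i)).2
      have r₂ := (Finset.mem_filter.1 (h₂ i)).2
      by_cases p₁ : v₁ i % S = (m:ℤ)
      · by_cases p₂ : v₂ i % S = (m:ℤ)
        · rw [p₁, p₂]
        · exfalso; simp [p₁, p₂] at e
      · by_cases p₂ : v₂ i % S = (m:ℤ)
        · exfalso; simp [p₁, p₂] at e
        · rw [r₁.resolve_right p₁, r₂.resolve_right p₂]
    obtain ⟨i, hi⟩ : ∃ i, v₁ i ≠ v₂ i := by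
      by_contra h; push_neg at h; exact hne (funext h)
    have hdvd : S ∣ v₂ i - v₁ i := Int.ModEq.dvd (hres i)
    have hge : S ≤ |v₂ i - v₁ i| :=
      Int.le_of_dvd (abs_pos.2 (sub_ne_zero.2 (Ne.symm hi))) ((dvd_abs _ _).mpr hdvd)
    rw [Set.disjoint_left]
    rintro z ⟨a, ⟨ha, -⟩, rfl⟩ ⟨b, ⟨hb, -⟩, hab⟩
    have hai := ha i
    have hbi := hb i
    have heq := congrFun hab i
    simp only [Pi.add_apply] at heq
    rw [abs_le] at hai hbi
    rw [le_abs] at hge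
    clear hg hab ha hb
    omega
end
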